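/- arXiv:2411.11277 — 3 statements merged into one kernel-verified Lean document; each statement's English description precedes it below -/
import Mathlib

section
/- Let S_1,…,S_r be finite subsets of a universe with r = (1+γ)k for some γ ∈ [0,1), and suppose |S_1 ∪ ⋯ ∪ S_r| = L. Then there exists a subcollection of k of these sets whose union has cardinality at least (1-γ)L. -/
/-!
Split the union into the disjoint pieces `S j \ ⋃_{i < j} S i` and keep the `k` sets whose pieces
are largest: they carry at least a `k / r` share of the `L` elements, and
`(1 - γ) r = (1 - γ²) k ≤ k`.
-/

open Finset

variable {ι M : Type*} [Fintype ι] [AddCommMonoid M] [LinearOrder M]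

/-- Take a `k`-subset of maximal total weight: swapping in a heavier outside index would increase
the total. -/
theorem Finset.exists_card_eq_forall_notMem_le [IsOrderedCancelAddMonoid M] (w : ι → M) {k : ℕ}
    (hk : k ≤ Fintype.card ι) :
    ∃ T : Finset ι, #T = k ∧ ∀ i ∉ T, ∀ j ∈ T, w i ≤ w j := by
  classical
  have hne : (powersetCard k (univ : Finset ι)).Nonempty := powersetCard_nonempty.mpr hk
  obtain ⟨T, hT, hmax⟩ := exists_max_image _ (fun T ↦ ∑ j ∈ T, w j) hne
  obtain ⟨-, hTcard⟩ := mem_powersetCard.mp hT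
  refine ⟨T, hTcard, fun i hi j hj ↦ ?_⟩
  have hi' : i ∉ T.erase j := fun h ↦ hi (mem_of_mem_erase h)
  have hswap : insert i (T.erase j) ∈ powersetCard k univ := by
    refine mem_powersetCard.mpr ⟨subset_univ _, ?_⟩
    rw [card_insert_of_notMem hi', card_erase_add_one hj, hTcard]
  have hle := hmax _ hswap
  rw [sum_insert hi', ← add_sum_erase T w hj] at hle
  exact le_of_add_le_add_right hle

theorem Finset.card_nsmul_sum_le_of_forall_notMem_le [IsOrderedAddMonoid M] {w : ι → M}
    (T : Finset ι) (hT : ∀ i ∉ T, ∀ j ∈ T, w i ≤ w j) :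
    #T • ∑ i, w i ≤ Fintype.card ι • ∑ j ∈ T, w j := by
  classical
  have houtside : #T • ∑ i ∈ Tᶜ, w i ≤ #Tᶜ • ∑ j ∈ T, w j := by
    calc #T • ∑ i ∈ Tᶜ, w i = ∑ i ∈ Tᶜ, #T • w i := smul_sum
      _ ≤ ∑ _i ∈ Tᶜ, ∑ j ∈ T, w j :=
          sum_le_sum fun i hi ↦ card_nsmul_le_sum T w (w i) (hT i (mem_compl.mp hi))
      _ = #Tᶜ • ∑ j ∈ T, w j := sum_const _
  calc #T • ∑ i, w i = #T • ∑ j ∈ T, w j + #T • ∑ i ∈ Tᶜ, w i := by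
        rw [← smul_add, sum_add_sum_compl]
    _ ≤ #T • ∑ j ∈ T, w j + #Tᶜ • ∑ j ∈ T, w j := add_le_add_right houtside _
    _ = Fintype.card ι • ∑ j ∈ T, w j := by rw [← add_smul, card_add_card_compl]

theorem Finset.exists_card_eq_mul_card_biUnion_le {α : Type*} [DecidableEq α]
    (S : ι → Finset α) {k : ℕ} (hk : k ≤ Fintype.card ι) :
    ∃ T : Finset ι, #T = k ∧ k * #(univ.biUnion S) ≤ Fintype.card ι * #(T.biUnion S) := by
  obtain ⟨D, hDS, hDunion, hDdisj⟩ := Fintype.exists_disjointed_le S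
  obtain ⟨T, hTcard, hTheavy⟩ := exists_card_eq_forall_notMem_le (fun j ↦ #(D j)) hk
  refine ⟨T, hTcard, ?_⟩
  have hcard_biUnion (s : Finset ι) : #(s.biUnion D) = ∑ j ∈ s, #(D j) :=
    card_biUnion fun i _ j _ hij ↦ hDdisj hij
  have hunion : #(univ.biUnion S) = ∑ j, #(D j) := by
    rw [← hcard_biUnion, ← sup_eq_biUnion, ← sup_eq_biUnion, hDunion]
  have hpieces : ∑ j ∈ T, #(D j) ≤ #(T.biUnion S) :=
    hcard_biUnion T ▸ card_le_card (biUnion_mono fun j _ ↦ hDS j)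
  calc k * #(univ.biUnion S) = #T • ∑ j, #(D j) := by rw [hunion, hTcard, smul_eq_mul]
    _ ≤ Fintype.card ι • ∑ j ∈ T, #(D j) := card_nsmul_sum_le_of_forall_notMem_le T hTheavy
    _ ≤ Fintype.card ι * #(T.biUnion S) := Nat.mul_le_mul_left _ hpieces

theorem stmt_0_general (n r k : ℕ) (hr : 0 < r) (γ : ℝ)
    (hγ0 : 0 ≤ γ) (hrk : (r : ℝ) = (1 + γ) * k)
    (S : Fin r → Finset (Fin n)) :
    ∃ T : Finset (Fin r), T.card = k ∧
      (1 - γ) * ((Finset.univ.biUnion S).card : ℝ) ≤ ((T.biUnion S).card : ℝ) := by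
  have hkr : k ≤ r := by exact_mod_cast (by nlinarith : (k : ℝ) ≤ r)
  obtain ⟨T, hTcard, hcover⟩ :=
    exists_card_eq_mul_card_biUnion_le S (k := k) (by rwa [Fintype.card_fin])
  refine ⟨T, hTcard, ?_⟩
  rw [Fintype.card_fin] at hcover
  have hcoverR : (k : ℝ) * #(univ.biUnion S) ≤ r * #(T.biUnion S) := by exact_mod_cast hcover
  have hshare : (1 - γ) * r ≤ k := by rw [hrk]; nlinarith [sq_nonneg γ, k.cast_nonneg (α := ℝ)]
  have hr' : (0 : ℝ) < r := by exact_mod_cast hr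
  refine le_of_mul_le_mul_left ?_ hr'
  nlinarith [(univ.biUnion S).card.cast_nonneg (α := ℝ)]

/-- Among r = (1+γ)k sets covering L elements, some k of them cover at least (1-γ)L. -/
theorem stmt_0 (n r k : ℕ) (hk : 0 < k) (hr : 0 < r) (γ : ℝ)
    (hγ0 : 0 ≤ γ) (hγ1 : γ < 1) (hrk : (r : ℝ) = (1 + γ) * k)
    (S : Fin r → Finset (Fin n)) :
    ∃ T : Finset (Fin r), T.card = k ∧
      (1 - γ) * ((Finset.univ.biUnion S).card : ℝ) ≤ ((T.biUnion S).card : ℝ) :=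
  stmt_0_general n r k hr γ hγ0 hrk S
end

section
/- Suppose for every t = 1,…,T we have Σ_i e_i^{(t)} w_i^{(t-1)} ≥ −1/n⁵, where w_i^{(t)} = exp(−α Σ_{d=1}^t e_i^{(d)}) with w_i^{(0)} = 1 and each e_i^{(t)} ∈ [−1,1], 0 < α ≤ 1/2, and assume additionally 1/(α n⁵) ≤ 1 and n ≥ 1. Then for every i: (1/T)Σ_{t=1}^T e_i^{(t)} ≥ −ln(2n)/(Tα) − α. -/
lemma exp_quad {y : ℝ} (hy : |y| ≤ 1) : Real.exp y ≤ 1 + y + y ^ 2 := by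
  have h := Real.exp_bound hy (by norm_num : 0 < 2)
  have h2 : ∑ m ∈ Finset.range 2, y ^ m / m.factorial = 1 + y := by
    simp [Finset.sum_range_succ]
  rw [h2] at h
  have h3 := (abs_sub_le_iff.1 h).1
  have h4 : |y| ^ 2 = y ^ 2 := sq_abs y
  have h5 : ((2:ℕ).succ / ((2:ℕ).factorial * (2:ℕ)) : ℝ) = 3/4 := by norm_num [Nat.factorial]
  rw [h4, h5] at h3
  nlinarith [sq_nonneg y]

set_option maxHeartbeats 1000000 in
/-- Multiplicative weights guarantee: each coordinate's average error is bounded below. -/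
theorem stmt_16 (n T : ℕ) (hn : 1 ≤ n) (hT : 1 ≤ T)
    (α : ℝ) (hα0 : 0 < α) (hα1 : α ≤ 1 / 2)
    (hαn : 1 / (α * (n : ℝ) ^ 5) ≤ 1)
    (e : Fin n → ℕ → ℝ)
    (he : ∀ i, ∀ t ∈ Finset.Icc 1 T, e i t ∈ Set.Icc (-1 : ℝ) 1)
    (hW : ∀ t ∈ Finset.Icc 1 T,
      -(1 / (n : ℝ) ^ 5) ≤
        ∑ i, e i t * Real.exp (-α * ∑ d ∈ Finset.Icc 1 (t - 1), e i d)) :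
    ∀ i, -(Real.log (2 * n)) / ((T : ℝ) * α) - α ≤
      (1 / (T : ℝ)) * ∑ t ∈ Finset.Icc 1 T, e i t := by
  intro i
  have hn1 : (1:ℝ) ≤ (n:ℝ) := by exact_mod_cast hn
  have hT1 : (1:ℝ) ≤ (T:ℝ) := by exact_mod_cast hT
  have hTpos : (0:ℝ) < T := by linarith
  have hn5 : (0:ℝ) < (n:ℝ)^5 := by positivity
  set Φ : ℕ → ℝ := fun t => ∑ j, Real.exp (-α * ∑ d ∈ Finset.Icc 1 t, e j d) with hΦ
  set c : ℝ := 1 / (α * (n:ℝ)^5) with hc'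
  have hc0 : 0 < c := by positivity
  -- single step bound
  have step : ∀ s : ℕ, s + 1 ≤ T → Φ (s+1) ≤ (1+α^2) * Φ s + α / (n:ℝ)^5 := by
    intro s hs
    have hmem : s + 1 ∈ Finset.Icc 1 T := by simp [Nat.succ_le_iff]; omega
    have hW' := hW (s+1) hmem
    simp only [Nat.add_sub_cancel] at hW'
    have hsum : ∀ j : Fin n, Real.exp (-α * ∑ d ∈ Finset.Icc 1 (s+1), e j d) ≤
        Real.exp (-α * ∑ d ∈ Finset.Icc 1 s, e j d) * (1 + α^2 - α * e j (s+1)) := by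
      intro j
      have hsplit : ∑ d ∈ Finset.Icc 1 (s+1), e j d
          = (∑ d ∈ Finset.Icc 1 s, e j d) + e j (s+1) :=
        Finset.sum_Icc_succ_top (by omega) _
      rw [hsplit, mul_add, Real.exp_add]
      have hej := he j (s+1) hmem
      have h1 : |(-α * e j (s+1))| ≤ 1 := by
        rw [abs_mul, abs_neg]
        have : |e j (s+1)| ≤ 1 := abs_le.2 ⟨hej.1, hej.2⟩
        calc |α| * |e j (s+1)| ≤ |α| * 1 := by
              exact mul_le_mul_of_nonneg_left this (abs_nonneg _)
          _ = α := by rw [mul_one, abs_of_pos hα0]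
          _ ≤ 1 := by linarith
      have h2 := exp_quad h1
      have h3 : (-α * e j (s+1))^2 ≤ α^2 := by
        have he2 : (e j (s+1))^2 ≤ 1 := by nlinarith [hej.1, hej.2]
        calc (-α * e j (s+1))^2 = α^2 * (e j (s+1))^2 := by ring
          _ ≤ α^2 * 1 := by nlinarith [sq_nonneg α]
          _ = α^2 := mul_one _
      have h4 : Real.exp (-α * e j (s+1)) ≤ 1 + α^2 - α * e j (s+1) := by nlinarith
      exact mul_le_mul_of_nonneg_left h4 (Real.exp_pos _).le
    calc Φ (s+1) ≤ ∑ j, Real.exp (-α * ∑ d ∈ Finset.Icc 1 s, e j d) * (1 + α^2 - α * e j (s+1)) :=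
          Finset.sum_le_sum fun j _ => hsum j
      _ = ∑ j, ((1+α^2) * Real.exp (-α * ∑ d ∈ Finset.Icc 1 s, e j d)
            - α * (e j (s+1) * Real.exp (-α * ∑ d ∈ Finset.Icc 1 s, e j d))) :=
          Finset.sum_congr rfl fun j _ => by ring
      _ = (1+α^2) * Φ s - α * ∑ j, e j (s+1) * Real.exp (-α * ∑ d ∈ Finset.Icc 1 s, e j d) := by
          rw [Finset.sum_sub_distrib, ← Finset.mul_sum, ← Finset.mul_sum]
      _ ≤ (1+α^2) * Φ s + α / (n:ℝ)^5 := by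
          have h6 := mul_le_mul_of_nonneg_left hW' hα0.le
          rw [mul_neg] at h6
          have h7 : α * (1 / (n:ℝ)^5) = α / (n:ℝ)^5 := by ring
          rw [h7] at h6
          linarith
  -- induction
  have main : ∀ t, t ≤ T → Φ t ≤ (1+α^2)^t * ((n:ℝ) + c) - c := by
    intro t
    induction t with
    | zero =>
      intro _
      have h0 : Φ 0 = n := by simp [hΦ]
      rw [h0, pow_zero, one_mul]; linarith
    | succ s ih =>
      intro hs
      have ihs := ih (by omega)
      have hstep := step s hs
      have hac : α / (n:ℝ)^5 = α^2 * c := by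
        rw [hc']; field_simp
      rw [hac] at hstep
      have hpos : (0:ℝ) ≤ 1 + α^2 := by positivity
      calc Φ (s+1) ≤ (1+α^2) * ((1+α^2)^s * ((n:ℝ) + c) - c) + α^2 * c := by nlinarith
        _ = (1+α^2)^(s+1) * ((n:ℝ) + c) - c := by ring
  have hmain := main T le_rfl
  -- single weight ≤ potential
  set S : ℝ := ∑ t ∈ Finset.Icc 1 T, e i t with hS
  have hterm : Real.exp (-α * S) ≤ Φ T := by
    refine Finset.single_le_sum (f := fun j => Real.exp (-α * ∑ d ∈ Finset.Icc 1 T, e j d))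
      (fun j _ => (Real.exp_pos _).le) (Finset.mem_univ i)
  have hcle : c ≤ 1 := hαn
  have hfin : Real.exp (-α * S) ≤ (1+α^2)^T * (2*(n:ℝ)) := by
    have h1 : Φ T ≤ (1+α^2)^T * ((n:ℝ) + 1) := by
      have hp : (0:ℝ) ≤ (1+α^2)^T := by positivity
      nlinarith
    have h2 : (1+α^2)^T * ((n:ℝ) + 1) ≤ (1+α^2)^T * (2*(n:ℝ)) := by
      have hp : (0:ℝ) ≤ (1+α^2)^T := by positivity
      nlinarith
    linarith
  -- take logs
  have hL : -α * S ≤ (T:ℝ) * α^2 + Real.log (2*(n:ℝ)) := by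
    have hpos2 : (0:ℝ) < (1+α^2)^T * (2*(n:ℝ)) := by positivity
    have := Real.log_le_log (Real.exp_pos _) hfin
    rw [Real.log_exp, Real.log_mul (by positivity) (by positivity), Real.log_pow] at this
    have hlog1 : Real.log (1+α^2) ≤ α^2 := by
      have h := Real.add_one_le_exp (α^2)
      have := Real.log_le_log (by positivity : (0:ℝ) < 1 + α^2) (by linarith : 1 + α^2 ≤ Real.exp (α^2))
      rwa [Real.log_exp] at this
    have hT0 : (0:ℝ) ≤ T := le_of_lt hTpos
    nlinarith
  -- conclude
  have hTα : (0:ℝ) < (T:ℝ) * α := mul_pos hTpos hα0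
  rw [div_sub' (ne_of_gt hTα), div_le_iff₀ hTα]
  have hrw : 1/(T:ℝ) * S * ((T:ℝ)*α) = α * S := by field_simp
  rw [hrw]
  nlinarith [hL]
end

section
/- Suppose x ∈ [0,1]^n and y ∈ [0,1]^m satisfy x_i ≤ Σ_{j : i∈S_j} y_j for all i, and Σ_j y_j = k. If each set S_j is included independently in a random collection with k independent draws from the distribution (y_1/k, …, y_m/k), then for each element i, the probability that i is covered by the union of the drawn sets is at least (1 − 1/e)·x_i. -/
open Real

lemma Real.exp_neg_le_one_sub_mul {t : ℝ} (h0 : 0 ≤ t) (h1 : t ≤ 1) :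
    exp (-t) ≤ 1 - (1 - exp (-1)) * t := by
  have h := convexOn_exp.2 (Set.mem_univ 0) (Set.mem_univ (-1)) (sub_nonneg.2 h1) h0
    (sub_add_cancel 1 t)
  simp only [smul_eq_mul, mul_zero, zero_add, mul_neg, mul_one, exp_zero] at h
  linarith

theorem stmt_19_general (n m k : ℕ) (S : Fin m → Finset (Fin n))
    (y : Fin m → ℝ) (hy : ∀ j, y j ∈ Set.Icc (0 : ℝ) 1)
    (hsum : ∑ j, y j = (k : ℝ))
    (x : Fin n → ℝ) (hx : ∀ i, x i ∈ Set.Icc (0 : ℝ) 1)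
    (hcov : ∀ i, x i ≤ ∑ j ∈ Finset.univ.filter (fun j => i ∈ S j), y j)
    (i : Fin n) :
    (1 - 1 / Real.exp 1) * x i ≤
      1 - (1 - (∑ j ∈ Finset.univ.filter (fun j => i ∈ S j), y j) / (k : ℝ)) ^ k := by
  set s := ∑ j ∈ Finset.univ.filter (fun j => i ∈ S j), y j
  have hsk : s ≤ k := hsum ▸ Finset.sum_le_sum_of_subset_of_nonneg (Finset.filter_subset _ _)
    fun j _ _ => (hy j).1
  calc (1 - 1 / exp 1) * x i = (1 - exp (-1)) * x i := by rw [exp_neg, one_div]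
    _ ≤ 1 - exp (-x i) := by linarith [exp_neg_le_one_sub_mul (hx i).1 (hx i).2]
    _ ≤ 1 - exp (-s) := by gcongr; exact hcov i
    _ ≤ 1 - (1 - s / k) ^ k := by gcongr; exact one_sub_div_pow_le_exp_neg hsk

/-- With k i.i.d. draws from the distribution (y_j/k)_j, the probability that element i
is covered, namely 1 - (1 - Σ_{j : i∈S_j} y_j/k)^k, is at least (1 - 1/e)·x_i. -/
theorem stmt_19 (n m k : ℕ) (hk : 0 < k) (S : Fin m → Finset (Fin n))
    (y : Fin m → ℝ) (hy : ∀ j, y j ∈ Set.Icc (0 : ℝ) 1)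
    (hsum : ∑ j, y j = (k : ℝ))
    (x : Fin n → ℝ) (hx : ∀ i, x i ∈ Set.Icc (0 : ℝ) 1)
    (hcov : ∀ i, x i ≤ ∑ j ∈ Finset.univ.filter (fun j => i ∈ S j), y j)
    (i : Fin n) :
    (1 - 1 / Real.exp 1) * x i ≤
      1 - (1 - (∑ j ∈ Finset.univ.filter (fun j => i ∈ S j), y j) / (k : ℝ)) ^ k :=
  stmt_19_general n m k S y hy hsum x hx hcov i
end
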